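/- Let n ≥ 5, set l := ⌊n/2⌋, and let Δ ⊂ ℝ^l be the root system of H(n), namely Δ := {ε_I − ε_J : I, J ⊆ {1,…,l}, I ∩ J = ∅, (I, J) ≠ (∅, ∅)}, where ε_I := Σ_{i∈I} ε_i (and ε_∅ := 0). Let W be the group of linear maps of ℝ^l of the form ε_i ↦ ±ε_{σ(i)} for σ ∈ S_l, with arbitrary signs if n is odd and with an even number of minus signs if n is even (the Weyl group of so(n)). Set P₀ := {ε_I − ε_J ∈ Δ : 1 ∉ I ∪ J} ∪ {ε_I − ε_J ∈ Δ : 1 ∈ I}. Then a subset P ⊆ Δ is a cominuscule parabolic set of roots of Δ if and only if w(P) = P₀ for some w ∈ W; in particular P₀ is itself a cominuscule parabolic set of roots. -/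

import Mathlib

open Pointwise

/-- A proper subset `P` of a symmetric root set `Δ` is a parabolic set of roots if
`Δ = P ∪ (-P)` and `P` is closed under sums lying in `Δ`. -/
def IsParabolic {V : Type*} [AddCommGroup V] (Δ P : Set V) : Prop :=
  P ⊂ Δ ∧ Δ = P ∪ (-P) ∧ ∀ α ∈ P, ∀ β ∈ P, α + β ∈ Δ → α + β ∈ P

/-- A parabolic set of roots is cominuscule if the sum of any two elements of its
nilradical `N⁺ = P \ (-P)` is not a root. -/
def IsCominuscule {V : Type*} [AddCommGroup V] (Δ P : Set V) : Prop :=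
  IsParabolic Δ P ∧ ∀ α ∈ P \ (-P), ∀ β ∈ P \ (-P), α + β ∉ Δ

namespace Hn

variable {l : ℕ}

/-- `ε_I := Σ_{i ∈ I} ε_i` in `ℝ^l` (and `ε_∅ = 0`). -/
noncomputable def εF (I : Finset (Fin l)) : Fin l → ℝ := ∑ i ∈ I, Pi.single i 1

/-- The root system of `H(n)`, `l = ⌊n/2⌋`. -/
noncomputable def Δroot (l : ℕ) : Set (Fin l → ℝ) :=
  {v | ∃ I J : Finset (Fin l), Disjoint I J ∧ ¬(I = ∅ ∧ J = ∅) ∧ v = εF I - εF J}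

/-- The cominuscule parabolic set `P₀`: the roots `ε_I - ε_J` with `1 ∉ I ∪ J`
together with those with `1 ∈ I` (the index `1` is `0` in 0-based indexing). -/
noncomputable def P₀ (l : ℕ) : Set (Fin l → ℝ) :=
  {v | ∃ I J : Finset (Fin l), Disjoint I J ∧ ¬(I = ∅ ∧ J = ∅) ∧
      (∀ i ∈ I ∪ J, (i : ℕ) ≠ 0) ∧ v = εF I - εF J} ∪
  {v | ∃ I J : Finset (Fin l), Disjoint I J ∧ (∃ i ∈ I, (i : ℕ) = 0) ∧ v = εF I - εF J}

/-- A signed permutation `ε_i ↦ ±ε_{σ(i)}` of `ℝ^l`. -/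
def act (σ : Equiv.Perm (Fin l)) (s : Fin l → ℝ) : (Fin l → ℝ) → (Fin l → ℝ) :=
  fun v i => s i * v (σ.symm i)

end Hn

/-!
The roots are the nonzero vectors with coordinates in `{-1, 0, 1}`. If `P` is cominuscule, its
nilradical `N⁺` contains a signed unit vector `s • εᵢ`: otherwise every `±εⱼ` lies in `P`, and as
each root is reached from a `±εⱼ` by adding signed unit vectors through roots, `P` would be all
of `Δ`. Since `α + s • εᵢ` is a root whenever `αᵢ ≠ s`, cominuscularity forces `αᵢ = s` on
`N⁺`, and together with `P + N⁺ ⊆ N⁺` this gives `P = {v ∈ Δ | vᵢ ∈ {0, s}}`. A signed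
permutation sending `i` to the first index and `s` to `1`, with one more sign change on a
second coordinate to keep the number of minus signs even, carries this set to `P₀`. Conversely,
signed permutations are additive automorphisms preserving `Δ`, hence they transport
cominuscularity from `P₀`, which is cominuscule by looking at its first coordinate.
-/

section Parabolic

variable {V : Type*} [AddCommGroup V] {Δ P : Set V} {α β : V}

namespace IsParabolic

theorem subset (h : IsParabolic Δ P) : P ⊆ Δ := h.1.1

theorem mem_or_neg_mem (h : IsParabolic Δ P) (hα : α ∈ Δ) : α ∈ P ∨ -α ∈ P := by
  rw [h.2.1] at hα
  exact hα

theorem neg_mem (h : IsParabolic Δ P) (hα : α ∈ Δ) : -α ∈ Δ := by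
  rw [h.2.1] at hα ⊢
  rcases hα with hα | hα
  · exact Or.inr (by simpa using hα)
  · exact Or.inl hα

theorem add_mem_nilradical (h : IsParabolic Δ P) (hα : α ∈ P)
    (hβ : β ∈ P \ -P) (hαβ : α + β ∈ Δ) : α + β ∈ P \ -P := by
  have hsum : -(α + β) + α = -β := by abel
  refine ⟨h.2.2 α hα β hβ.1 hαβ, fun hneg => hβ.2 ?_⟩
  have := h.2.2 _ hneg α hα (hsum ▸ h.neg_mem (h.subset hβ.1))
  rwa [hsum] at this

theorem preimage (h : IsParabolic Δ P) (g : V ≃+ V) (hg : ∀ v, g v ∈ Δ ↔ v ∈ Δ) :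
    IsParabolic Δ (g ⁻¹' P) := by
  obtain ⟨γ, hγΔ, hγP⟩ := Set.exists_of_ssubset h.1
  refine ⟨⟨fun v hv => (hg v).1 (h.subset hv), fun hΔ => hγP ?_⟩, ?_,
    fun α hα β hβ hαβ => ?_⟩
  · simpa using hΔ ((hg _).1 (by simpa using hγΔ) : g.symm γ ∈ Δ)
  · ext v
    rw [← hg, h.2.1]
    simp
  · rw [Set.mem_preimage] at hα hβ ⊢
    rw [map_add]
    exact h.2.2 _ hα _ hβ (by rw [← map_add, hg]; exact hαβ)

end IsParabolic

theorem IsCominuscule.preimage (h : IsCominuscule Δ P) (g : V ≃+ V)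
    (hg : ∀ v, g v ∈ Δ ↔ v ∈ Δ) : IsCominuscule Δ (g ⁻¹' P) := by
  have hnil : ∀ v, v ∈ g ⁻¹' P \ -(g ⁻¹' P) ↔ g v ∈ P \ -P := fun v => by simp
  exact ⟨h.1.preimage g hg, fun α hα β hβ hαβ =>
    h.2 _ ((hnil α).1 hα) _ ((hnil β).1 hβ) (by rwa [← map_add, hg])⟩

end Parabolic

namespace Hn

variable {l : ℕ}

theorem sub_εF_apply {I J : Finset (Fin l)} (hIJ : Disjoint I J) (i : Fin l) :
    (εF I - εF J) i = if i ∈ I then 1 else if i ∈ J then -1 else 0 := by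
  by_cases hI : i ∈ I
  · simp [εF, Finset.sum_apply, Pi.single_apply, hI, Finset.disjoint_left.1 hIJ hI]
  · by_cases hJ : i ∈ J <;> simp [εF, Finset.sum_apply, Pi.single_apply, hI, hJ]

theorem mem_Δroot_iff {v : Fin l → ℝ} :
    v ∈ Δroot l ↔ v ≠ 0 ∧ ∀ i, v i ∈ ({-1, 0, 1} : Set ℝ) := by
  constructor
  · rintro ⟨I, J, hIJ, hne, rfl⟩
    refine ⟨fun h0 => hne ⟨?_, ?_⟩, fun i => ?_⟩
    · refine Finset.eq_empty_of_forall_notMem fun i hi => ?_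
      simpa [sub_εF_apply hIJ, hi] using congrFun h0 i
    · refine Finset.eq_empty_of_forall_notMem fun i hi => ?_
      simpa [sub_εF_apply hIJ, hi, Finset.disjoint_right.1 hIJ hi] using congrFun h0 i
    · rw [sub_εF_apply hIJ]
      split_ifs <;> simp
  · rintro ⟨h0, hv⟩
    have hIJ : Disjoint ({i | v i = 1} : Finset (Fin l)) ({i | v i = -1} : Finset (Fin l)) :=
      Finset.disjoint_filter.2 fun i _ h1 h2 => by norm_num [h1] at h2
    refine ⟨_, _, hIJ, ?_, ?_⟩
    · rintro ⟨hI, hJ⟩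
      refine h0 (funext fun i => ?_)
      have hI : v i ≠ 1 := fun h => by simpa [h] using Finset.ext_iff.1 hI i
      have hJ : v i ≠ -1 := fun h => by simpa [h] using Finset.ext_iff.1 hJ i
      rcases hv i with h | h | h <;> simp_all
    · funext i
      rw [sub_εF_apply hIJ]
      rcases hv i with h | h | h <;> simp_all

theorem neg_mem_Δroot {v : Fin l → ℝ} (hv : v ∈ Δroot l) : -v ∈ Δroot l := by
  obtain ⟨I, J, hIJ, hne, rfl⟩ := hv
  exact ⟨J, I, hIJ.symm, fun h => hne ⟨h.2, h.1⟩, by rw [neg_sub]⟩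

theorem single_mem_Δroot (i : Fin l) {s : ℝ} (hs : s = 1 ∨ s = -1) :
    Pi.single i s ∈ Δroot l := by
  refine mem_Δroot_iff.2 ⟨fun h => ?_, fun j => ?_⟩
  · have := congrFun h i
    rcases hs with rfl | rfl <;> simp at this
  · rcases eq_or_ne j i with rfl | hj
    · rcases hs with rfl | rfl <;> simp
    · simp [hj]

theorem add_single_mem_Δroot {v : Fin l → ℝ} (hv : v ∈ Δroot l) {i : Fin l} {s : ℝ}
    (hvi : v i + s ∈ ({-1, 0, 1} : Set ℝ)) (hne : v + Pi.single i s ≠ 0) :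
    v + Pi.single i s ∈ Δroot l := by
  refine mem_Δroot_iff.2 ⟨hne, fun j => ?_⟩
  rcases eq_or_ne j i with rfl | hj
  · simpa using hvi
  · simpa [hj] using (mem_Δroot_iff.1 hv).2 j

theorem mem_signs_iff {s x : ℝ} (hs : s = 1 ∨ s = -1) :
    x ∈ ({-1, 0, 1} : Set ℝ) ↔ x = 0 ∨ x = s ∨ x = -s := by
  rcases hs with rfl | rfl <;> simp <;> tauto

def coordParabolic (i : Fin l) (s : ℝ) : Set (Fin l → ℝ) :=
  {v | v ∈ Δroot l ∧ (v i = 0 ∨ v i = s)}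

theorem isCominuscule_coordParabolic (i : Fin l) {s : ℝ} (hs : s = 1 ∨ s = -1) :
    IsCominuscule (Δroot l) (coordParabolic i s) := by
  have hcoord : ∀ v ∈ Δroot l, v i = 0 ∨ v i = s ∨ v i = -s := fun v hv =>
    (mem_signs_iff hs).1 ((mem_Δroot_iff.1 hv).2 i)
  have hnil : ∀ v ∈ coordParabolic i s \ -coordParabolic i s, v i = s := by
    rintro v ⟨⟨hv, h0 | hvs⟩, hv'⟩
    · exact absurd ⟨neg_mem_Δroot hv, Or.inl (by simp [h0])⟩ hv'
    · exact hvs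
  have htwo : ∀ v ∈ Δroot l, v i ≠ s + s := by
    intro v hv h
    rcases hcoord v hv with h' | h' | h' <;> rw [h'] at h <;>
      rcases hs with rfl | rfl <;> norm_num at h
  refine ⟨⟨⟨fun v hv => hv.1, fun hsub => ?_⟩, ?_, ?_⟩, fun α hα β hβ hαβ => ?_⟩
  · have := (hsub (single_mem_Δroot i (s := -s) (by rcases hs with rfl | rfl <;> norm_num))).2
    rcases hs with rfl | rfl <;> norm_num at this
  · ext v
    constructor
    · intro hv
      rcases hcoord v hv with h | h | h
      · exact Or.inl ⟨hv, Or.inl h⟩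
      · exact Or.inl ⟨hv, Or.inr h⟩
      · exact Or.inr ⟨neg_mem_Δroot hv, Or.inr (by simp [h])⟩
    · rintro (hv | hv)
      · exact hv.1
      · simpa using neg_mem_Δroot hv.1
  · rintro α ⟨-, hαi⟩ β ⟨-, hβi⟩ hαβ
    refine ⟨hαβ, ?_⟩
    rcases hαi with h | h <;> rcases hβi with h' | h'
    · exact Or.inl (by simp [h, h'])
    · exact Or.inr (by simp [h, h'])
    · exact Or.inr (by simp [h, h'])
    · exact absurd (by simp [h, h']) (htwo _ hαβ)
  · exact htwo _ hαβ (by simp [hnil α hα, hnil β hβ])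

theorem P₀_eq_coordParabolic [NeZero l] : P₀ l = coordParabolic 0 1 := by
  ext v
  constructor
  · rintro (⟨I, J, hIJ, hne, h0, rfl⟩ | ⟨I, J, hIJ, ⟨i, hi, hi0⟩, rfl⟩)
    · refine ⟨⟨I, J, hIJ, hne, rfl⟩, Or.inl ?_⟩
      have h0I : (0 : Fin l) ∉ I := fun h => h0 0 (Finset.mem_union_left J h) rfl
      have h0J : (0 : Fin l) ∉ J := fun h => h0 0 (Finset.mem_union_right I h) rfl
      simp [sub_εF_apply hIJ, h0I, h0J]
    · obtain rfl : i = 0 := Fin.ext hi0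
      refine ⟨⟨I, J, hIJ, fun h => by simp [h.1] at hi, rfl⟩, Or.inr ?_⟩
      simp [sub_εF_apply hIJ, hi]
  · rintro ⟨⟨I, J, hIJ, hne, rfl⟩, h0 | h1⟩
    · refine Or.inl ⟨I, J, hIJ, hne, fun i hi hi0 => ?_, rfl⟩
      obtain rfl : i = 0 := Fin.ext hi0
      rw [sub_εF_apply hIJ] at h0
      rcases Finset.mem_union.1 hi with h | h
      · simp [h] at h0
      · simp [h, Finset.disjoint_right.1 hIJ h] at h0
    · refine Or.inr ⟨I, J, hIJ, ⟨0, ?_, rfl⟩, rfl⟩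
      by_contra h
      rw [sub_εF_apply hIJ, if_neg h] at h1
      split_ifs at h1 <;> norm_num at h1

theorem Δroot_subset_of_single_mem {P : Set (Fin l → ℝ)}
    (hadd : ∀ α ∈ P, ∀ β ∈ P, α + β ∈ Δroot l → α + β ∈ P)
    (hsingle : ∀ i (s : ℝ), (s = 1 ∨ s = -1) → Pi.single i s ∈ P) : Δroot l ⊆ P := by
  suffices ∀ S : Finset (Fin l), ∀ v ∈ Δroot l, (∀ i ∉ S, v i = 0) → v ∈ P from
    fun v hv => this Finset.univ v hv (by simp)
  intro S
  induction S using Finset.induction_on with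
  | empty =>
    exact fun v hv hS => absurd (funext fun i => hS i (Finset.notMem_empty i))
      (mem_Δroot_iff.1 hv).1
  | insert j S _ ih =>
    intro v hv hS
    have hvj : v j ≠ 0 → v j = 1 ∨ v j = -1 := by
      have := (mem_Δroot_iff.1 hv).2 j
      simp only [Set.mem_insert_iff, Set.mem_singleton_iff] at this
      tauto
    set w := v + Pi.single j (-v j)
    have hwS : ∀ i ∉ S, w i = 0 := by
      intro i hi
      rcases eq_or_ne i j with rfl | hij
      · simp [w]
      · simpa [w, hij] using hS i (by simp [hi, hij])
    have hvw : v = w + Pi.single j (v j) := by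
      rw [add_assoc, ← Pi.single_add, neg_add_cancel, Pi.single_zero, add_zero]
    by_cases hw : w = 0
    · rw [hvw, hw, zero_add] at hv ⊢
      exact hsingle j _ (hvj fun h => (mem_Δroot_iff.1 hv).1 (by simp [h]))
    · have hwP : w ∈ P := ih w (add_single_mem_Δroot hv (by simp) hw) hwS
      by_cases hvj0 : v j = 0
      · rwa [hvw, hvj0, Pi.single_zero, add_zero]
      · rw [hvw] at hv ⊢
        exact hadd w hwP _ (hsingle j _ (hvj hvj0)) hv

theorem exists_eq_coordParabolic_of_isCominuscule {P : Set (Fin l → ℝ)}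
    (h : IsCominuscule (Δroot l) P) :
    ∃ i s, (s = 1 ∨ s = -1) ∧ P = coordParabolic i s := by
  have hpar := h.1
  obtain ⟨i, s, hs, he⟩ : ∃ i s, (s = 1 ∨ s = -1) ∧ Pi.single i s ∈ P \ -P := by
    by_contra! hno
    refine hpar.1.2 (Δroot_subset_of_single_mem hpar.2.2 fun i s hs => ?_)
    have hs' : -s = 1 ∨ -s = -1 := by rcases hs with rfl | rfl <;> norm_num
    rcases hpar.mem_or_neg_mem (single_mem_Δroot i hs) with hP | hP
    · exact hP
    · by_contra hsP
      exact hno i (-s) hs'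
        ⟨by rwa [Pi.single_neg], by rwa [Set.mem_neg, Pi.single_neg, neg_neg]⟩
  have hs0 : s ≠ 0 := by rcases hs with rfl | rfl <;> norm_num
  have hcoord : ∀ v ∈ Δroot l, v i = 0 ∨ v i = s ∨ v i = -s := fun v hv =>
    (mem_signs_iff hs).1 ((mem_Δroot_iff.1 hv).2 i)
  have hnil : ∀ γ ∈ P \ -P, γ i = s := by
    intro γ hγ
    by_contra hγi
    refine h.2 γ hγ _ he (add_single_mem_Δroot (hpar.subset hγ.1) ?_ fun h0 => he.2 ?_)
    · rw [mem_signs_iff hs]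
      rcases hcoord γ (hpar.subset hγ.1) with h | h | h
      · simp [h]
      · exact absurd h hγi
      · simp [h]
    · rw [Set.mem_neg, ← eq_neg_of_add_eq_zero_left h0]
      exact hγ.1
  have hsmem : ∀ v ∈ Δroot l, v i = s → v ∈ P \ -P := by
    intro v hv hvi
    have hv' : -v ∉ P := by
      intro hnv
      have hvP : v ∈ P := by
        by_contra hvP
        have := hnil (-v) ⟨hnv, by simpa using hvP⟩
        rw [Pi.neg_apply, hvi] at this
        rcases hs with rfl | rfl <;> norm_num at this
      have hve : v ≠ Pi.single i s := fun hve => he.2 (by rw [← hve]; exact hnv)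
      have hsum := hpar.add_mem_nilradical hnv he
        (add_single_mem_Δroot (neg_mem_Δroot hv) (by simp [hvi]) fun h0 => hve ?_)
      · simpa [hvi, eq_comm, hs0] using hnil _ hsum
      · rwa [neg_add_eq_zero] at h0
    exact ⟨(hpar.mem_or_neg_mem hv).resolve_right hv', hv'⟩
  have hzero : ∀ v ∈ Δroot l, v i = 0 → v ∈ P := by
    intro v hv hvi
    by_contra hvP
    have hnv := (hpar.mem_or_neg_mem hv).resolve_left hvP
    have := hnil (-v) ⟨hnv, by simpa using hvP⟩
    simp [hvi, eq_comm, hs0] at this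
  refine ⟨i, s, hs, Set.ext fun v => ⟨fun hv => ⟨hpar.subset hv, ?_⟩, ?_⟩⟩
  · rcases hcoord v (hpar.subset hv) with h | h | h
    · exact Or.inl h
    · exact Or.inr h
    · exact absurd (by simpa using hv)
        (hsmem (-v) (neg_mem_Δroot (hpar.subset hv)) (by simp [h])).2
  · rintro ⟨hv, h0 | hvs⟩
    · exact hzero v hv h0
    · exact (hsmem v hv hvs).1

theorem sign_mul_mem_iff {s x : ℝ} (hs : s = 1 ∨ s = -1) :
    s * x ∈ ({-1, 0, 1} : Set ℝ) ↔ x ∈ ({-1, 0, 1} : Set ℝ) := by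
  rcases hs with rfl | rfl
  · simp
  · simp [neg_eq_iff_eq_neg]
    tauto

section SignedPermutation

variable {s : Fin l → ℝ}

def actEquiv (σ : Equiv.Perm (Fin l)) (hs : ∀ i, s i = 1 ∨ s i = -1) :
    (Fin l → ℝ) ≃+ (Fin l → ℝ) where
  toFun := act σ s
  invFun := act σ.symm (s ∘ σ)
  left_inv v := funext fun i => by
    simp [act, ← mul_assoc, mul_self_eq_one_iff.2 (hs (σ i))]
  right_inv v := funext fun i => by
    simp [act, ← mul_assoc, mul_self_eq_one_iff.2 (hs i)]
  map_add' a b := funext fun i => mul_add _ _ _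

variable {σ : Equiv.Perm (Fin l)}

theorem act_mem_Δroot_iff (hs : ∀ i, s i = 1 ∨ s i = -1) {v : Fin l → ℝ} :
    act σ s v ∈ Δroot l ↔ v ∈ Δroot l := by
  simp only [mem_Δroot_iff]
  refine and_congr (not_congr (EmbeddingLike.map_eq_zero_iff (f := actEquiv σ hs))) ?_
  simp only [act, sign_mul_mem_iff (hs _)]
  exact σ.symm.forall_congr_right (q := fun i => v i ∈ ({-1, 0, 1} : Set ℝ))

theorem act_image_coordParabolic (hs : ∀ i, s i = 1 ∨ s i = -1) (i : Fin l) (t : ℝ) :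
    act σ s '' coordParabolic i t = coordParabolic (σ i) (s (σ i) * t) := by
  ext v
  change v ∈ (actEquiv σ hs).toEquiv '' _ ↔ _
  rw [Equiv.image_eq_preimage_symm]
  change act σ.symm (s ∘ σ) v ∈ Δroot l ∧
      (s (σ i) * v (σ i) = 0 ∨ s (σ i) * v (σ i) = t) ↔
    v ∈ Δroot l ∧ (v (σ i) = 0 ∨ v (σ i) = s (σ i) * t)
  rw [act_mem_Δroot_iff (s := s ∘ σ) fun j => hs (σ j)]
  rcases hs (σ i) with h | h <;> simp [h, neg_eq_iff_eq_neg]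

theorem exists_act_image_coordParabolic [Nontrivial (Fin l)] (i j : Fin l) {t : ℝ}
    (ht : t = 1 ∨ t = -1) :
    ∃ (σ : Equiv.Perm (Fin l)) (s : Fin l → ℝ), (∀ k, s k = 1 ∨ s k = -1) ∧ ∏ k, s k = 1 ∧
      act σ s '' coordParabolic i t = coordParabolic j 1 := by
  obtain ⟨k, hk⟩ := exists_ne j
  let s : Fin l → ℝ := fun m => if m ∈ ({j, k} : Finset (Fin l)) then t else 1
  have hs : ∀ m, s m = 1 ∨ s m = -1 := fun m => by
    unfold s
    split_ifs
    · exact ht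
    · exact Or.inl rfl
  refine ⟨Equiv.swap i j, s, hs, ?_, ?_⟩
  · rw [Finset.prod_ite_mem, Finset.univ_inter, Finset.prod_pair hk.symm,
      mul_self_eq_one_iff.2 ht]
  · rw [act_image_coordParabolic hs, Equiv.swap_apply_left]
    simp [s, mul_self_eq_one_iff.2 ht]

end SignedPermutation

end Hn

theorem stmt_18_general (n : ℕ) (hn : 5 ≤ n) (l : ℕ) (hl : l = n / 2)
    (P : Set (Fin l → ℝ)) :
    (IsCominuscule (Hn.Δroot l) P ↔
      ∃ (σ : Equiv.Perm (Fin l)) (s : Fin l → ℝ), (∀ i, s i = 1 ∨ s i = -1) ∧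
        (n % 2 = 0 → ∏ i, s i = 1) ∧
        Hn.act σ s '' P = Hn.P₀ l) ∧
    IsCominuscule (Hn.Δroot l) (Hn.P₀ l) := by
  have : NeZero l := ⟨by omega⟩
  have : Nontrivial (Fin l) := Fin.nontrivial_iff_two_le.2 (by omega)
  have hP₀ : IsCominuscule (Hn.Δroot l) (Hn.P₀ l) := by
    rw [Hn.P₀_eq_coordParabolic]
    exact Hn.isCominuscule_coordParabolic 0 (Or.inl rfl)
  refine ⟨⟨fun hP => ?_, fun ⟨σ, s, hs, _, himage⟩ => ?_⟩, hP₀⟩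
  · obtain ⟨i, t, ht, rfl⟩ := Hn.exists_eq_coordParabolic_of_isCominuscule hP
    obtain ⟨σ, s, hs, hprod, himage⟩ := Hn.exists_act_image_coordParabolic i 0 ht
    exact ⟨σ, s, hs, fun _ => hprod, himage.trans Hn.P₀_eq_coordParabolic.symm⟩
  · have hPeq : P = Hn.actEquiv σ hs ⁻¹' Hn.P₀ l := by
      rw [← himage]
      exact (Set.preimage_image_eq P (Hn.actEquiv σ hs).injective).symm
    rw [hPeq]
    exact hP₀.preimage (Hn.actEquiv σ hs) fun v => Hn.act_mem_Δroot_iff hs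

theorem stmt_18 (n : ℕ) (hn : 5 ≤ n) (l : ℕ) (hl : l = n / 2)
    (P : Set (Fin l → ℝ)) (hP : P ⊆ Hn.Δroot l) :
    (IsCominuscule (Hn.Δroot l) P ↔
      ∃ (σ : Equiv.Perm (Fin l)) (s : Fin l → ℝ), (∀ i, s i = 1 ∨ s i = -1) ∧
        (n % 2 = 0 → ∏ i, s i = 1) ∧
        Hn.act σ s '' P = Hn.P₀ l) ∧
    IsCominuscule (Hn.Δroot l) (Hn.P₀ l) :=
  stmt_18_general n hn l hl P
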